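/- Let H be a real Hilbert space, let c > 0, let ζ_c be Huber's loss function (ζ_c(t) = t²/2 for 0 ≤ t ≤ c, ζ_c(t) = ct − c²/2 for t > c), and let φ_c(t) = 1 for 0 ≤ t ≤ c and φ_c(t) = c/t for t > c. Let x_1, ..., x_n ∈ H and suppose f ∈ H minimizes the robust empirical risk F(g) = ∑_{i=1}^n ζ_c(‖x_i − g‖) over H. Then f is the weighted mean of the data points with weights determined by φ_c: f = ∑_{i=1}^n w_i x_i, where w_i = φ_c(‖x_i − f‖) / ∑_{b=1}^n φ_c(‖x_b − f‖); in particular f lies in the span (indeed the convex hull) of x_1, ..., x_n. -/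

import Mathlib

/-!
Majorize–minimize. For `s ≥ 0` the parabola `s ↦ ζ_c(t) + φ_c(t) (s² - t²) / 2` lies above `ζ_c`
and touches it at `s = t`. Summing these majorants at `tᵢ = ‖xᵢ - f‖` gives a weighted quadratic
risk in `g`, minimized at the `φ_c`-weighted mean `m` of the data; by the parallel-axis identity
its value at `m` is `F(f) - (∑ φ_c(tᵢ)) ‖m - f‖² / 2`. Minimality of `f` forces `m = f`.
-/

open Finset

noncomputable section

def huberLoss (c t : ℝ) : ℝ := if t ≤ c then t ^ 2 / 2 else c * t - c ^ 2 / 2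

def huberWeight (c t : ℝ) : ℝ := if t ≤ c then 1 else c / t

lemma huberWeight_pos {c : ℝ} (hc : 0 < c) (t : ℝ) : 0 < huberWeight c t := by
  unfold huberWeight
  split_ifs with h
  · exact one_pos
  · exact div_pos hc (hc.trans (not_le.mp h))

lemma huberLoss_le_add_huberWeight_mul {c s : ℝ} (hc : 0 < c) (hs : 0 ≤ s) (t : ℝ) :
    huberLoss c s ≤ huberLoss c t + huberWeight c t * (s ^ 2 - t ^ 2) / 2 := by
  unfold huberLoss huberWeight
  split_ifs with hsc htc htc
  · linarith
  · have ht : 0 < t := hc.trans (not_le.mp htc)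
    have key : c * t - c ^ 2 / 2 + c / t * (s ^ 2 - t ^ 2) / 2 - s ^ 2 / 2
        = (t - c) * (c * t - s ^ 2) / (2 * t) := by
      field_simp
      ring
    have hs2 : s ^ 2 ≤ c * t := by nlinarith
    have : 0 ≤ (t - c) * (c * t - s ^ 2) / (2 * t) := by
      apply div_nonneg (mul_nonneg _ _) <;> linarith
    linarith
  · nlinarith [sq_nonneg (s - c)]
  · have ht : 0 < t := hc.trans (not_le.mp htc)
    have key : c * t - c ^ 2 / 2 + c / t * (s ^ 2 - t ^ 2) / 2 - (c * s - c ^ 2 / 2)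
        = c * (s - t) ^ 2 / (2 * t) := by
      field_simp
      ring
    have : 0 ≤ c * (s - t) ^ 2 / (2 * t) := by positivity
    linarith

section CenterMass

variable {ι E : Type*}

lemma Finset.sum_smul_sub_centerMass {R : Type*} [Field R] [AddCommGroup E] [Module R E]
    {s : Finset ι} {a : ι → R} (ha : ∑ i ∈ s, a i ≠ 0) (x : ι → E) :
    ∑ i ∈ s, a i • (x i - s.centerMass a x) = 0 := by
  simp only [smul_sub, sum_sub_distrib, ← sum_smul, centerMass]
  rw [smul_smul, mul_inv_cancel₀ ha, one_smul, sub_self]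

variable [NormedAddCommGroup E] [InnerProductSpace ℝ E]

lemma Finset.sum_mul_norm_sub_sq_eq_add_centerMass {s : Finset ι} {a : ι → ℝ}
    (ha : ∑ i ∈ s, a i ≠ 0) (x : ι → E) (g : E) :
    ∑ i ∈ s, a i * ‖x i - g‖ ^ 2 =
      ∑ i ∈ s, a i * ‖x i - s.centerMass a x‖ ^ 2 +
        (∑ i ∈ s, a i) * ‖s.centerMass a x - g‖ ^ 2 := by
  have expand (i : ι) : a i * ‖x i - g‖ ^ 2 = a i * ‖x i - s.centerMass a x‖ ^ 2 +
      2 * inner ℝ (a i • (x i - s.centerMass a x)) (s.centerMass a x - g) +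
        a i * ‖s.centerMass a x - g‖ ^ 2 := by
    rw [real_inner_smul_left, ← sub_add_sub_cancel (x i) (s.centerMass a x) g, norm_add_sq_real]
    ring
  simp only [expand, sum_add_distrib, ← mul_sum, ← sum_inner, ← sum_mul]
  rw [sum_smul_sub_centerMass ha, inner_zero_left, mul_zero, add_zero]

end CenterMass

section Huber

variable {ι E : Type*} [NormedAddCommGroup E] [InnerProductSpace ℝ E]

/-- One step of the paper's KIRWLS iteration. -/
def huberReweightedMean (c : ℝ) (s : Finset ι) (x : ι → E) (f : E) : E :=
  s.centerMass (fun i => huberWeight c ‖x i - f‖) x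

lemma sum_huberLoss_huberReweightedMean_add_le {c : ℝ} (hc : 0 < c) (s : Finset ι)
    (x : ι → E) (f : E) :
    ∑ i ∈ s, huberLoss c ‖x i - huberReweightedMean c s x f‖ +
        (∑ i ∈ s, huberWeight c ‖x i - f‖) * ‖huberReweightedMean c s x f - f‖ ^ 2 / 2 ≤
      ∑ i ∈ s, huberLoss c ‖x i - f‖ := by
  rcases s.eq_empty_or_nonempty with rfl | hs
  · simp
  set a : ι → ℝ := fun i => huberWeight c ‖x i - f‖
  have hS : ∑ i ∈ s, a i ≠ 0 := (sum_pos (fun i _ => huberWeight_pos hc _) hs).ne'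
  have majorize : ∑ i ∈ s, huberLoss c ‖x i - s.centerMass a x‖ ≤
      ∑ i ∈ s, huberLoss c ‖x i - f‖ +
        (∑ i ∈ s, a i * ‖x i - s.centerMass a x‖ ^ 2 - ∑ i ∈ s, a i * ‖x i - f‖ ^ 2) / 2 := by
    rw [← sum_sub_distrib, sum_div, ← sum_add_distrib]
    refine sum_le_sum fun i _ => ?_
    rw [← mul_sub]
    exact huberLoss_le_add_huberWeight_mul hc (norm_nonneg _) _
  have parallelAxis := sum_mul_norm_sub_sq_eq_add_centerMass hS x f
  unfold huberReweightedMean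
  linarith

theorem eq_huberReweightedMean_of_forall_le {c : ℝ} (hc : 0 < c) {s : Finset ι}
    (hs : s.Nonempty) {x : ι → E} {f : E}
    (hmin : ∀ g, ∑ i ∈ s, huberLoss c ‖x i - f‖ ≤ ∑ i ∈ s, huberLoss c ‖x i - g‖) :
    f = huberReweightedMean c s x f := by
  have hS : 0 < ∑ i ∈ s, huberWeight c ‖x i - f‖ := sum_pos (fun i _ => huberWeight_pos hc _) hs
  have hle := sum_huberLoss_huberReweightedMean_add_le hc s x f
  have hsq : ‖huberReweightedMean c s x f - f‖ ^ 2 ≤ 0 := by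
    nlinarith [hmin (huberReweightedMean c s x f)]
  rw [eq_comm, ← sub_eq_zero, ← norm_eq_zero]
  exact pow_eq_zero_iff two_ne_zero |>.mp (le_antisymm hsq (sq_nonneg _))

end Huber

end

theorem huber_robust_mean_representer_general
    {H : Type*} [NormedAddCommGroup H] [InnerProductSpace ℝ H]
    (c : ℝ) (hc : 0 < c) (ζ φc : ℝ → ℝ)
    (hζ : ∀ t, 0 ≤ t → ζ t = if t ≤ c then t ^ 2 / 2 else c * t - c ^ 2 / 2)
    (hφc : ∀ t, 0 ≤ t → φc t = if t ≤ c then 1 else c / t)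
    (n : ℕ) (hn : 0 < n) (x : Fin n → H) (f : H)
    (hmin : ∀ g : H, ∑ i, ζ ‖x i - f‖ ≤ ∑ i, ζ ‖x i - g‖)
    (w : Fin n → ℝ)
    (hw : ∀ i, w i = φc ‖x i - f‖ / ∑ b, φc ‖x b - f‖) :
    f = ∑ i, w i • x i ∧ f ∈ convexHull ℝ (Set.range x) := by
  have hζ' (g : H) : ∑ i, ζ ‖x i - g‖ = ∑ i, huberLoss c ‖x i - g‖ :=
    sum_congr rfl fun i _ => hζ _ (norm_nonneg _)
  have hφc' (i : Fin n) : φc ‖x i - f‖ = huberWeight c ‖x i - f‖ := hφc _ (norm_nonneg _)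
  have hne : (univ : Finset (Fin n)).Nonempty := univ_nonempty_iff.mpr ⟨⟨0, hn⟩⟩
  have hfix : f = huberReweightedMean c univ x f :=
    eq_huberReweightedMean_of_forall_le hc hne fun g => by simpa only [hζ'] using hmin g
  constructor
  · conv_lhs => rw [hfix]
    simp only [huberReweightedMean, centerMass, hw, hφc', smul_sum, smul_smul, div_eq_inv_mul]
  · rw [hfix]
    exact centerMass_mem_convexHull _ (fun i _ => (huberWeight_pos hc _).le)
      (sum_pos (fun i _ => huberWeight_pos hc _) hne) fun i _ => Set.mem_range_self i

/-- Representer form of the robust kernel mean for Huber's loss: a minimizer `f` of the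
robust empirical risk `g ↦ ∑ i, ζ_c(‖x i − g‖)` is the weighted mean of the data points
with weights `w i = φ_c(‖x i − f‖) / ∑ b, φ_c(‖x b − f‖)`; in particular `f` lies in the
convex hull of the data points. -/
theorem huber_robust_mean_representer
    {H : Type*} [NormedAddCommGroup H] [InnerProductSpace ℝ H] [CompleteSpace H]
    (c : ℝ) (hc : 0 < c) (ζ φc : ℝ → ℝ)
    (hζ : ∀ t, 0 ≤ t → ζ t = if t ≤ c then t ^ 2 / 2 else c * t - c ^ 2 / 2)
    (hφc : ∀ t, 0 ≤ t → φc t = if t ≤ c then 1 else c / t)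
    (n : ℕ) (hn : 0 < n) (x : Fin n → H) (f : H)
    (hmin : ∀ g : H, ∑ i, ζ ‖x i - f‖ ≤ ∑ i, ζ ‖x i - g‖)
    (w : Fin n → ℝ)
    (hw : ∀ i, w i = φc ‖x i - f‖ / ∑ b, φc ‖x b - f‖) :
    f = ∑ i, w i • x i ∧ f ∈ convexHull ℝ (Set.range x) :=
  huber_robust_mean_representer_general c hc ζ φc hζ hφc n hn x f hmin w hw
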